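/- arXiv:1808.04782 — 4 statements merged into one kernel-verified Lean document; each statement's English description precedes it below -/
import Mathlib

section
/- (Theorem 1(a), standard non-weight-preserving tempering.) Let d ≥ 1, let μ ∈ ℝ^d, let Σ be a positive definite real d×d matrix, let w > 0 and let β > 0. Then ∫_{ℝ^d} (w · φ(x; μ, Σ))^β dx = w^β · ((2π)^d · det Σ)^{(1-β)/2} · β^{-d/2}. In particular, for a Gaussian mixture π(x) ∝ Σ_j w_j φ(x; μ_j, Σ_j), the mass that the power-tempered component [w_j φ(x; μ_j, Σ_j)]^β assigns to mode j is proportional to w_j^β (det Σ_j)^{(1-β)/2}. -/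
/-!
The `β`-th power of `w φ(·; μ, Σ)` is `w^β ((2π)^d det Σ)^{-β/2}` times the Gaussian kernel
`exp(-(β/2) (x-μ)ᵀ Σ⁻¹ (x-μ))`. Writing `Σ⁻¹ = BᵀB`, the substitution `z = B (x - μ)` turns the
kernel into a product of one-dimensional Gaussians, whose integral is `(2π/β)^{d/2} √(det Σ)`.
-/

open MeasureTheory Matrix

/-- The multivariate Gaussian density
`φ(x; μ, Σ) = (2π)^{-d/2} (det Σ)^{-1/2} exp(-(1/2)(x-μ)ᵀ Σ⁻¹ (x-μ))`. -/
noncomputable def gaussDensity (d : ℕ) (μ : Fin d → ℝ) (S : Matrix (Fin d) (Fin d) ℝ)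
    (x : Fin d → ℝ) : ℝ :=
  (2 * Real.pi) ^ (-(d : ℝ) / 2) * S.det ^ (-(1 : ℝ) / 2) *
    Real.exp (-(1 / 2) * ((x - μ) ⬝ᵥ (S⁻¹ *ᵥ (x - μ))))

open Real

section

variable {ι : Type*} [Fintype ι]

theorem integral_exp_neg_mul_sum_sq {b : ℝ} (hb : 0 < b) :
    ∫ v : ι → ℝ, exp (-b * ∑ i, v i ^ 2) = (π / b) ^ (Fintype.card ι / 2 : ℝ) := by
  simp_rw [Finset.mul_sum, exp_sum]
  rw [integral_fintype_prod_volume_eq_pow (fun x : ℝ => exp (-b * x ^ 2)), integral_gaussian,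
    sqrt_eq_rpow, ← rpow_mul_natCast (by positivity)]
  ring_nf

theorem dotProduct_transpose_mul_mulVec_eq_sum_sq (B : Matrix ι ι ℝ) (y : ι → ℝ) :
    y ⬝ᵥ (Bᵀ * B) *ᵥ y = ∑ i, (B *ᵥ y) i ^ 2 := by
  rw [← mulVec_mulVec, dotProduct_mulVec, vecMul_transpose]
  simp [dotProduct, sq]

variable [DecidableEq ι]

theorem integral_comp_mulVec {E : Type*} [NormedAddCommGroup E] [NormedSpace ℝ E]
    {M : Matrix ι ι ℝ} (hM : M.det ≠ 0) (f : (ι → ℝ) → E) :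
    ∫ y, f (M *ᵥ y) = |M.det|⁻¹ • ∫ z, f z := by
  have hinj : (toLin' M).ker = ⊥ :=
    LinearMap.ker_eq_bot.mpr <|
      mulVec_injective_iff_isUnit.mpr ((isUnit_iff_isUnit_det M).mpr hM.isUnit)
  have hemb := (LinearMap.isClosedEmbedding_of_injective hinj).measurableEmbedding
  calc ∫ y, f (M *ᵥ y) = ∫ z, f z ∂(Measure.map (toLin' M) volume) := (hemb.integral_map f).symm
    _ = |M.det|⁻¹ • ∫ z, f z := by
      rw [Real.map_matrix_volume_pi_eq_smul_volume_pi hM, integral_smul_measure,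
        ENNReal.toReal_ofReal (abs_nonneg _), abs_inv]

open scoped MatrixOrder in
theorem Matrix.PosDef.integral_exp_neg_mul_dotProduct_mulVec {A : Matrix ι ι ℝ} (hA : A.PosDef)
    {b : ℝ} (hb : 0 < b) :
    ∫ y, exp (-b * (y ⬝ᵥ A *ᵥ y)) = (π / b) ^ (Fintype.card ι / 2 : ℝ) / √A.det := by
  obtain ⟨B, rfl⟩ := CStarAlgebra.nonneg_iff_eq_star_mul_self.mp hA.posSemidef.nonneg
  simp_rw [star_eq_conjTranspose, conjTranspose_eq_transpose_of_trivial] at hA ⊢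
  have hdet : (Bᵀ * B).det = B.det ^ 2 := by rw [det_mul, det_transpose, sq]
  have hB : B.det ≠ 0 := fun h => hA.det_pos.ne' (by rw [hdet, h]; ring)
  simp_rw [dotProduct_transpose_mul_mulVec_eq_sum_sq]
  rw [integral_comp_mulVec hB (fun z => exp (-b * ∑ i, z i ^ 2)), integral_exp_neg_mul_sum_sq hb,
    hdet, sqrt_sq_eq_abs, smul_eq_mul, inv_mul_eq_div]

end

theorem gaussDensity_eq_rpow_mul_exp {d : ℕ} (μ : Fin d → ℝ) {S : Matrix (Fin d) (Fin d) ℝ}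
    (hS : 0 ≤ S.det) (x : Fin d → ℝ) :
    gaussDensity d μ S x =
      ((2 * π) ^ (d : ℝ) * S.det) ^ (-(1 : ℝ) / 2) *
        exp (-(1 / 2) * ((x - μ) ⬝ᵥ S⁻¹ *ᵥ (x - μ))) := by
  rw [gaussDensity, mul_rpow (by positivity) hS, ← rpow_mul (by positivity)]
  ring_nf

theorem mul_gaussDensity_rpow {d : ℕ} (μ : Fin d → ℝ) {S : Matrix (Fin d) (Fin d) ℝ}
    (hS : 0 ≤ S.det) {w : ℝ} (hw : 0 ≤ w) (β : ℝ) (x : Fin d → ℝ) :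
    (w * gaussDensity d μ S x) ^ β =
      w ^ β * ((2 * π) ^ (d : ℝ) * S.det) ^ (-β / 2) *
        exp (-(β / 2) * ((x - μ) ⬝ᵥ S⁻¹ *ᵥ (x - μ))) := by
  have hK : 0 ≤ (2 * π) ^ (d : ℝ) * S.det := by positivity
  rw [gaussDensity_eq_rpow_mul_exp μ hS, ← mul_assoc, mul_rpow (by positivity) (exp_pos _).le,
    mul_rpow hw (by positivity), ← rpow_mul hK, ← exp_mul]
  ring_nf

theorem integral_rpow_weighted_gaussDensity_general (d : ℕ) (μ : Fin d → ℝ)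
    (S : Matrix (Fin d) (Fin d) ℝ) (hS : S.PosDef) (w β : ℝ) (hw : 0 < w) (hβ : 0 < β) :
    ∫ x : Fin d → ℝ, (w * gaussDensity d μ S x) ^ β =
      w ^ β * ((2 * Real.pi) ^ (d : ℝ) * S.det) ^ ((1 - β) / 2) * β ^ (-(d : ℝ) / 2) := by
  set K := (2 * π) ^ (d : ℝ) * S.det
  have hdet := hS.det_pos
  have hK : 0 < K := by positivity
  have hK_sqrt : K ^ (1 / 2 : ℝ) * β ^ (-(d : ℝ) / 2) = (2 * π / β) ^ (d / 2 : ℝ) * √S.det := by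
    rw [mul_rpow (by positivity) hdet.le, ← rpow_mul (by positivity),
      div_rpow (by positivity) hβ.le, neg_div, rpow_neg hβ.le, sqrt_eq_rpow]
    ring_nf
  calc ∫ x, (w * gaussDensity d μ S x) ^ β
      = w ^ β * K ^ (-β / 2) * ∫ x, exp (-(β / 2) * ((x - μ) ⬝ᵥ S⁻¹ *ᵥ (x - μ))) := by
        simp_rw [mul_gaussDensity_rpow μ hdet.le hw.le]
        exact integral_const_mul _ _
    _ = w ^ β * K ^ (-β / 2) * ((2 * π / β) ^ (d / 2 : ℝ) * √S.det) := by
        rw [integral_sub_right_eq_self (fun y => exp (-(β / 2) * (y ⬝ᵥ S⁻¹ *ᵥ y))) μ,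
          hS.inv.integral_exp_neg_mul_dotProduct_mulVec (by positivity), det_nonsing_inv,
          Ring.inverse_eq_inv, sqrt_inv, div_inv_eq_mul, Fintype.card_fin, div_div_eq_mul_div]
        ring_nf
    _ = w ^ β * K ^ ((1 - β) / 2) * β ^ (-(d : ℝ) / 2) := by
        rw [← hK_sqrt, show (1 - β) / 2 = -β / 2 + 1 / 2 by ring, rpow_add hK]
        ring

/-- Theorem 1(a), standard non-weight-preserving tempering:
`∫ (w φ(x; μ, Σ))^β dx = w^β ((2π)^d det Σ)^{(1-β)/2} β^{-d/2}`, i.e. the mass that the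
power-tempered component assigns to mode `j` is proportional to `w^β (det Σ)^{(1-β)/2}`. -/
theorem integral_rpow_weighted_gaussDensity (d : ℕ) (hd : 1 ≤ d) (μ : Fin d → ℝ)
    (S : Matrix (Fin d) (Fin d) ℝ) (hS : S.PosDef) (w β : ℝ) (hw : 0 < w) (hβ : 0 < β) :
    ∫ x : Fin d → ℝ, (w * gaussDensity d μ S x) ^ β =
      w ^ β * ((2 * Real.pi) ^ (d : ℝ) * S.det) ^ ((1 - β) / 2) * β ^ (-(d : ℝ) / 2) :=
  integral_rpow_weighted_gaussDensity_general d μ S hS w β hw hβ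
end

section
/- (Theorem 1(c), weight-preserving tempering, version #2.) Let d ≥ 1, let μ ∈ ℝ^d, let Σ be a positive definite real d×d matrix, let w > 0 and β > 0, and set h(x) = w · φ(x; μ, Σ). Then h(x)^β · h(μ)^{1-β} = (w / β^{d/2}) · φ(x; μ, Σ/β) for every x ∈ ℝ^d, and hence ∫_{ℝ^d} h(x)^β h(μ)^{1-β} dx = w · β^{-d/2}. In particular, for a Gaussian mixture Σ_j w_j φ(x; μ_j, Σ_j) tempered componentwise via f_j(x, β) = h_j(x)^β h_j(μ_j)^{1-β}, the tempered component weights are proportional to w_j, independently of β and of the covariances Σ_j. -/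
/-!
Write `φ(x; μ, Σ) = φ(μ; μ, Σ) · exp(-q(x)/2)` with `q(x) = (x - μ)ᵀ Σ⁻¹ (x - μ)`. The geometric
interpolation `h(x)^β h(μ)^{1-β}` is then `h(μ) · exp(-β q(x)/2)`, and `β q` is the quadratic form
of `Σ/β`; the two Gaussians differ only by the ratio `β^{d/2}` of their normalising constants.
The integral follows from `∫ φ = 1`, which reduces to the standard Gaussian integral by writing
`Σ⁻¹ = Bᵀ B` and substituting `y = B x`.
-/

open MeasureTheory Matrix

theorem mul_rpow_mul_mul_rpow_one_sub {w a b : ℝ} (β : ℝ) (hw : 0 < w) (ha : 0 ≤ a)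
    (hb : 0 ≤ b) : (w * a) ^ β * (w * b) ^ (1 - β) = w * (a ^ β * b ^ (1 - β)) := by
  rw [Real.mul_rpow hw.le ha, Real.mul_rpow hw.le hb, mul_mul_mul_comm, ← Real.rpow_add hw,
    add_sub_cancel, Real.rpow_one]

section GaussianIntegral

variable {ι : Type*} [Fintype ι]

theorem integral_comp_mulVec_s5 [DecidableEq ι] {F : Type*} [NormedAddCommGroup F]
    [NormedSpace ℝ F] {T : Matrix ι ι ℝ} (hT : T.det ≠ 0) (g : (ι → ℝ) → F) :
    ∫ x, g (T *ᵥ x) = |T.det|⁻¹ • ∫ x, g x := by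
  have hunit : IsUnit T := (isUnit_iff_isUnit_det T).mpr (isUnit_iff_ne_zero.mpr hT)
  have hchange := integral_image_eq_integral_abs_det_fderiv_smul volume MeasurableSet.univ
    (fun x _ => (LinearMap.toContinuousLinearMap (toLin' T)).hasFDerivAt.hasFDerivWithinAt)
    (mulVec_injective_iff_isUnit.mpr hunit).injOn g
  have hrange : Set.range (toLin' T) = Set.univ :=
    (mulVec_surjective_iff_isUnit.mpr hunit).range_eq
  rw [Set.image_univ, LinearMap.coe_toContinuousLinearMap', hrange, Measure.restrict_univ,
    LinearMap.det_toContinuousLinearMap, LinearMap.det_toLin', integral_smul] at hchange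
  simp only [toLin'_apply] at hchange
  rw [hchange, inv_smul_smul₀ (abs_ne_zero.mpr hT)]

theorem integral_exp_neg_half_dotProduct_self :
    ∫ x : ι → ℝ, Real.exp (-(1 / 2) * (x ⬝ᵥ x)) =
      (2 * Real.pi) ^ ((Fintype.card ι : ℝ) / 2) := by
  have hprod (x : ι → ℝ) :
      Real.exp (-(1 / 2) * (x ⬝ᵥ x)) = ∏ i, Real.exp (-(1 / 2) * x i ^ 2) := by
    simp only [← Real.exp_sum, dotProduct, Finset.mul_sum, sq]
  simp_rw [hprod]
  rw [integral_fintype_prod_volume_eq_prod (fun _ t => Real.exp (-(1 / 2) * t ^ 2))]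
  simp only [integral_gaussian, Finset.prod_const, Finset.card_univ]
  rw [show Real.pi / (1 / 2) = 2 * Real.pi by ring, Real.sqrt_eq_rpow, ← Real.rpow_natCast,
    ← Real.rpow_mul (by positivity), one_div_mul_eq_div]

open scoped MatrixOrder in
theorem integral_exp_neg_half_dotProduct_mulVec [DecidableEq ι] {A : Matrix ι ι ℝ}
    (hA : A.PosDef) :
    ∫ x : ι → ℝ, Real.exp (-(1 / 2) * (x ⬝ᵥ (A *ᵥ x))) =
      (2 * Real.pi) ^ ((Fintype.card ι : ℝ) / 2) * A.det ^ (-(1 : ℝ) / 2) := by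
  obtain ⟨B, rfl⟩ := CStarAlgebra.nonneg_iff_eq_star_mul_self.mp hA.posSemidef.nonneg
  rw [star_eq_conjTranspose, conjTranspose_eq_transpose_of_trivial] at hA ⊢
  have hquad (x : ι → ℝ) : x ⬝ᵥ ((Bᵀ * B) *ᵥ x) = (B *ᵥ x) ⬝ᵥ (B *ᵥ x) := by
    rw [← mulVec_mulVec, dotProduct_mulVec, vecMul_transpose]
  have hdet : (Bᵀ * B).det = B.det ^ 2 := by rw [det_mul, det_transpose, sq]
  have hB : B.det ≠ 0 := fun h0 => by simpa [hdet, h0] using hA.det_pos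
  simp_rw [hquad]
  rw [integral_comp_mulVec_s5 hB (fun y => Real.exp (-(1 / 2) * (y ⬝ᵥ y))),
    integral_exp_neg_half_dotProduct_self, hdet, smul_eq_mul, mul_comm, ← sq_abs,
    ← Real.rpow_natCast, ← Real.rpow_mul (abs_nonneg _),
    show ((2 : ℕ) : ℝ) * (-1 / 2) = -1 by norm_num, Real.rpow_neg_one]

end GaussianIntegral

section gaussDensity

variable {d : ℕ} (μ : Fin d → ℝ) {S : Matrix (Fin d) (Fin d) ℝ}

theorem gaussDensity_pos (hS : 0 < S.det) (x : Fin d → ℝ) : 0 < gaussDensity d μ S x := by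
  unfold gaussDensity
  positivity

theorem gaussDensity_eq_mul_exp (x : Fin d → ℝ) :
    gaussDensity d μ S x =
      gaussDensity d μ S μ * Real.exp (-(1 / 2) * ((x - μ) ⬝ᵥ (S⁻¹ *ᵥ (x - μ)))) := by
  simp [gaussDensity]

theorem integral_gaussDensity (hS : S.PosDef) : ∫ x, gaussDensity d μ S x = 1 := by
  unfold gaussDensity
  rw [integral_const_mul,
    integral_sub_right_eq_self (fun x => Real.exp (-(1 / 2) * (x ⬝ᵥ (S⁻¹ *ᵥ x)))) μ,
    integral_exp_neg_half_dotProduct_mulVec hS.inv, det_nonsing_inv, Ring.inverse_eq_inv',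
    Fintype.card_fin, Real.inv_rpow hS.det_pos.le, mul_mul_mul_comm,
    ← Real.rpow_add (by positivity), mul_inv_cancel₀ (Real.rpow_pos_of_pos hS.det_pos _).ne',
    neg_div, neg_add_cancel, Real.rpow_zero, one_mul]

theorem gaussDensity_rpow_mul_rpow_one_sub (hS : 0 < S.det) {β : ℝ} (hβ : 0 < β)
    (x : Fin d → ℝ) :
    gaussDensity d μ S x ^ β * gaussDensity d μ S μ ^ (1 - β) =
      gaussDensity d μ (β⁻¹ • S) x / β ^ ((d : ℝ) / 2) := by
  have hinv : (β⁻¹ • S)⁻¹ = β • S⁻¹ := inv_eq_left_inv <| by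
    simp [smul_smul, hβ.ne', nonsing_inv_mul S (isUnit_iff_ne_zero.mpr hS.ne')]
  have hdet : (β⁻¹ • S).det ^ (-(1 : ℝ) / 2) = β ^ ((d : ℝ) / 2) * S.det ^ (-(1 : ℝ) / 2) := by
    rw [det_smul, Fintype.card_fin, Real.mul_rpow (by positivity) hS.le, inv_pow,
      Real.inv_rpow (by positivity), ← Real.rpow_natCast, ← Real.rpow_mul hβ.le,
      ← Real.rpow_neg hβ.le]
    ring_nf
  have hμ := gaussDensity_pos μ hS μ
  rw [gaussDensity_eq_mul_exp μ x, Real.mul_rpow hμ.le (Real.exp_pos _).le, mul_right_comm,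
    ← Real.rpow_add hμ, add_sub_cancel, Real.rpow_one, ← Real.exp_mul]
  unfold gaussDensity
  rw [hinv, hdet, smul_mulVec, dotProduct_smul, smul_eq_mul, sub_self, mulVec_zero,
    dotProduct_zero, mul_zero, Real.exp_zero, mul_one]
  field_simp

end gaussDensity

theorem weight_preserving_tempering_v2_general (d : ℕ) (μ : Fin d → ℝ)
    (S : Matrix (Fin d) (Fin d) ℝ) (hS : S.PosDef) (w β : ℝ) (hw : 0 < w) (hβ : 0 < β)
    (h : (Fin d → ℝ) → ℝ) (hdef : ∀ x, h x = w * gaussDensity d μ S x) :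
    (∀ x, h x ^ β * h μ ^ (1 - β) = w / β ^ ((d : ℝ) / 2) * gaussDensity d μ (β⁻¹ • S) x) ∧
      ∫ x : Fin d → ℝ, h x ^ β * h μ ^ (1 - β) = w * β ^ (-(d : ℝ) / 2) := by
  have htempered (x : Fin d → ℝ) :
      h x ^ β * h μ ^ (1 - β) = w / β ^ ((d : ℝ) / 2) * gaussDensity d μ (β⁻¹ • S) x := by
    rw [hdef, hdef, mul_rpow_mul_mul_rpow_one_sub β hw (gaussDensity_pos μ hS.det_pos x).le
      (gaussDensity_pos μ hS.det_pos μ).le, gaussDensity_rpow_mul_rpow_one_sub μ hS.det_pos hβ]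
    ring
  refine ⟨htempered, ?_⟩
  rw [integral_congr_ae (ae_of_all _ htempered), integral_const_mul,
    integral_gaussDensity μ (hS.smul (inv_pos.mpr hβ)), mul_one, div_eq_mul_inv,
    ← Real.rpow_neg hβ.le, neg_div]

/-- Theorem 1(c), weight-preserving tempering, version #2:
with `h(x) = w φ(x; μ, Σ)`, one has `h(x)^β h(μ)^{1-β} = (w / β^{d/2}) φ(x; μ, Σ/β)` for every
`x`, and hence `∫ h(x)^β h(μ)^{1-β} dx = w β^{-d/2}`, so the tempered component weights are
proportional to `w`, independently of `β` and of the covariance `Σ`. -/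
theorem weight_preserving_tempering_v2 (d : ℕ) (hd : 1 ≤ d) (μ : Fin d → ℝ)
    (S : Matrix (Fin d) (Fin d) ℝ) (hS : S.PosDef) (w β : ℝ) (hw : 0 < w) (hβ : 0 < β)
    (h : (Fin d → ℝ) → ℝ) (hdef : ∀ x, h x = w * gaussDensity d μ S x) :
    (∀ x, h x ^ β * h μ ^ (1 - β) = w / β ^ ((d : ℝ) / 2) * gaussDensity d μ (β⁻¹ • S) x) ∧
      ∫ x : Fin d → ℝ, h x ^ β * h μ ^ (1 - β) = w * β ^ (-(d : ℝ) / 2) :=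
  weight_preserving_tempering_v2_general d μ S hS w β hw hβ h hdef
end

section
/- (Dimensional degradation of power-tempered weights, equation (8).) Let d ≥ 1, let μ₁, μ₂ ∈ ℝ^d, let σ > 0, let w > 0 and β ∈ (0, 1]. Then the ratio of the power-tempered component masses of the two Gaussian components with equal weights and covariances σ²·I_d and I_d respectively satisfies ( ∫_{ℝ^d} (w φ(x; μ₂, σ² I_d))^β dx ) / ( ∫_{ℝ^d} (w φ(x; μ₁, I_d))^β dx ) = σ^{d(1-β)}. In particular, for fixed β < 1 and σ > 1, this ratio grows exponentially in the dimension d. -/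
/-!
Tempering a Gaussian component of covariance `c • 1` gives `(w φ)^β = w^β (2πc)^{-dβ/2} exp(-β‖x-μ‖²/(2c))`,
an unnormalized Gaussian of covariance `(c/β) • 1`, so its mass is `w^β (2πc)^{d(1-β)/2} / β^{d/2}`.
Only the factor `(2πc)^{d(1-β)/2}` depends on the covariance, and `c = σ²` against `c = 1` leaves
`(σ²)^{d(1-β)/2} = σ^{d(1-β)}`.
-/

open MeasureTheory Matrix

lemma gaussDensity_smul_one (d : ℕ) (μ : Fin d → ℝ) {c : ℝ} (hc : 0 < c) (x : Fin d → ℝ) :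
    gaussDensity d μ (c • 1) x
      = (2 * Real.pi * c) ^ (-(d : ℝ) / 2) * Real.exp (-(2 * c)⁻¹ * ∑ i, (x i - μ i) ^ 2) := by
  have hinv : (c • (1 : Matrix (Fin d) (Fin d) ℝ))⁻¹ = c⁻¹ • 1 :=
    Matrix.inv_eq_right_inv <| by rw [smul_mul_smul, one_mul, mul_inv_cancel₀ hc.ne', one_smul]
  have hdet : (c • (1 : Matrix (Fin d) (Fin d) ℝ)).det ^ (-(1 : ℝ) / 2) = c ^ (-(d : ℝ) / 2) := by
    rw [det_smul, det_one, mul_one, Fintype.card_fin, ← Real.rpow_natCast, ← Real.rpow_mul hc.le]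
    ring_nf
  have hquad : (x - μ) ⬝ᵥ (c⁻¹ • (1 : Matrix (Fin d) (Fin d) ℝ)) *ᵥ (x - μ)
      = c⁻¹ * ∑ i, (x i - μ i) ^ 2 := by
    simp [smul_mulVec, dotProduct, Finset.mul_sum, sq, mul_left_comm]
  rw [gaussDensity, hinv, hdet, hquad, Real.mul_rpow (by positivity) hc.le, mul_inv]
  ring_nf

lemma integral_exp_neg_mul_sum_sq_sub (d : ℕ) (μ : Fin d → ℝ) (a : ℝ) :
    ∫ x : Fin d → ℝ, Real.exp (-a * ∑ i, (x i - μ i) ^ 2) = Real.sqrt (Real.pi / a) ^ d := by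
  simp_rw [Finset.mul_sum, Real.exp_sum]
  rw [integral_fintype_prod_volume_eq_prod (fun i (v : ℝ) => Real.exp (-a * (v - μ i) ^ 2))]
  simp_rw [integral_sub_right_eq_self (fun v => Real.exp (-a * v ^ 2)), integral_gaussian]
  simp

lemma integral_rpow_mul_gaussDensity_smul_one (d : ℕ) (μ : Fin d → ℝ) {c w β : ℝ}
    (hc : 0 < c) (hw : 0 ≤ w) (hβ : 0 < β) :
    ∫ x : Fin d → ℝ, (w * gaussDensity d μ (c • 1) x) ^ β
      = w ^ β * (2 * Real.pi * c) ^ ((d : ℝ) * (1 - β) / 2) / β ^ ((d : ℝ) / 2) := by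
  have h2πc : 0 < 2 * Real.pi * c := by positivity
  have hpow : ∀ x : Fin d → ℝ, (w * gaussDensity d μ (c • 1) x) ^ β
      = w ^ β * (2 * Real.pi * c) ^ (-(d : ℝ) / 2 * β) *
        Real.exp (-(β / (2 * c)) * ∑ i, (x i - μ i) ^ 2) := by
    intro x
    rw [gaussDensity_smul_one d μ hc, Real.mul_rpow hw (by positivity),
      Real.mul_rpow (by positivity) (Real.exp_nonneg _), ← Real.rpow_mul h2πc.le,
      ← Real.exp_mul]
    ring_nf
  have hsqrt : Real.sqrt (Real.pi / (β / (2 * c))) ^ d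
      = (2 * Real.pi * c) ^ ((d : ℝ) / 2) / β ^ ((d : ℝ) / 2) := by
    rw [Real.sqrt_eq_rpow, ← Real.rpow_natCast, ← Real.rpow_mul (by positivity),
      ← Real.div_rpow h2πc.le hβ.le]
    congr 1 <;> field_simp
  simp_rw [hpow]
  rw [integral_const_mul, integral_exp_neg_mul_sum_sq_sub, hsqrt, mul_div_assoc', mul_assoc,
    ← Real.rpow_add h2πc]
  ring_nf

theorem power_tempered_weight_ratio_general (d : ℕ) (μ₁ μ₂ : Fin d → ℝ)
    (σ w : ℝ) (hσ : 0 < σ) (hw : 0 < w) (β : ℝ) (hβ0 : 0 < β) :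
    (∫ x : Fin d → ℝ,
        (w * gaussDensity d μ₂ (σ ^ 2 • (1 : Matrix (Fin d) (Fin d) ℝ)) x) ^ β) /
      (∫ x : Fin d → ℝ, (w * gaussDensity d μ₁ (1 : Matrix (Fin d) (Fin d) ℝ) x) ^ β) =
      σ ^ ((d : ℝ) * (1 - β)) := by
  have hden := integral_rpow_mul_gaussDensity_smul_one d μ₁ one_pos hw.le hβ0
  rw [one_smul, mul_one] at hden
  rw [hden, integral_rpow_mul_gaussDensity_smul_one d μ₂ (by positivity) hw.le hβ0,
    Real.mul_rpow (by positivity) (by positivity), ← Real.rpow_natCast, ← Real.rpow_mul hσ.le]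
  have hw' : 0 < w ^ β := Real.rpow_pos_of_pos hw β
  have h2π : 0 < (2 * Real.pi) ^ ((d : ℝ) * (1 - β) / 2) := by positivity
  have hβ' : 0 < β ^ ((d : ℝ) / 2) := Real.rpow_pos_of_pos hβ0 _
  field_simp
  ring_nf

/-- dimensional degradation of power-tempered weights, equation (8):
the ratio of the power-tempered masses of two equally weighted Gaussian components with
covariances `σ² I_d` and `I_d` equals `σ^{d(1-β)}`, which for fixed `β < 1` and `σ > 1`
grows exponentially in the dimension `d`. -/
theorem power_tempered_weight_ratio (d : ℕ) (hd : 1 ≤ d) (μ₁ μ₂ : Fin d → ℝ)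
    (σ w : ℝ) (hσ : 0 < σ) (hw : 0 < w) (β : ℝ) (hβ0 : 0 < β) (hβ1 : β ≤ 1) :
    (∫ x : Fin d → ℝ,
        (w * gaussDensity d μ₂ (σ ^ 2 • (1 : Matrix (Fin d) (Fin d) ℝ)) x) ^ β) /
      (∫ x : Fin d → ℝ, (w * gaussDensity d μ₁ (1 : Matrix (Fin d) (Fin d) ℝ) x) ^ β) =
      σ ^ ((d : ℝ) * (1 - β)) :=
  power_tempered_weight_ratio_general d μ₁ μ₂ σ w hσ hw β hβ0
end

section
/- (Exponential Power Family variance formula used in the proportionality condition.) Let λ > 0, r > 0 and β > 0, and let f(x) ∝ e^{-λ |x|^r} be the exponential power density on ℝ, so that the tempered density at inverse temperature β is f_β(x) = e^{-βλ|x|^r} / ∫_ℝ e^{-βλ|y|^r} dy. Then the variance of log f under f_β satisfies Var_{X ∼ f_β}( -λ |X|^r ) = 1/(r β²); that is, I(β) = Var_{x ∼ f^β}(log f(x)) = 1/(r β²). -/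
/-!
With `b = βλ`, the absolute moments `M s = ∫ |x|^s e^{-b|x|^r} dx` are Gamma integrals,
`M s = (2/r) b^{-(s+1)/r} Γ((s+1)/r)`, so `Γ(t+1) = t Γ(t)` gives `M (s+r) = (s+1)/(r b) · M s`.
Under the tempered density this yields `E|X|^r = 1/(r b)` and `E|X|^{2r} = (r+1)/(r b)²`, hence
`Var(λ|X|^r) = λ² ((r+1) - 1)/(r b)² = 1/(r β²)`.
-/

open MeasureTheory Real Set

theorem integrable_comp_abs_of_integrableOn_Ioi {E : Type*} [NormedAddCommGroup E] {f : ℝ → E}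
    (hf : IntegrableOn f (Ioi 0)) : Integrable (fun x => f |x|) := by
  have hIoi : IntegrableOn (fun x => f |x|) (Ioi 0) :=
    hf.congr_fun (fun x hx => by rw [abs_of_pos hx]) measurableSet_Ioi
  have hIic : IntegrableOn (fun x => f |x|) (Iic 0) := by
    have hIci : IntegrableOn (fun x => f |x|) (Ici (-0)) := by
      rwa [neg_zero, integrableOn_Ici_iff_integrableOn_Ioi]
    simpa only [abs_neg] using hIci.comp_neg_Iic
  rw [← integrableOn_univ, ← Iic_union_Ioi (a := 0)]
  exact hIic.union hIoi

section AbsMoments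

variable {p s b : ℝ}

theorem integrable_abs_rpow_mul_exp_neg_mul_abs_rpow (hs : -1 < s) (hp : 0 < p) (hb : 0 < b) :
    Integrable (fun x : ℝ => |x| ^ s * exp (-(b * |x| ^ p))) := by
  simpa only [neg_mul] using
    integrable_comp_abs_of_integrableOn_Ioi (integrableOn_rpow_mul_exp_neg_mul_rpow hs hp hb)

theorem integral_abs_rpow_mul_exp_neg_mul_abs_rpow (hs : -1 < s) (hp : 0 < p) (hb : 0 < b) :
    ∫ x : ℝ, |x| ^ s * exp (-(b * |x| ^ p)) =
      2 * (b ^ (-(s + 1) / p) * (1 / p) * Gamma ((s + 1) / p)) := by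
  rw [integral_comp_abs (f := fun t => t ^ s * exp (-(b * t ^ p)))]
  simp only [← neg_mul]
  rw [integral_rpow_mul_exp_neg_mul_rpow hp hs hb]

theorem integral_abs_rpow_add_mul_exp_neg_mul_abs_rpow (hs : -1 < s) (hp : 0 < p) (hb : 0 < b) :
    ∫ x : ℝ, |x| ^ (s + p) * exp (-(b * |x| ^ p)) =
      (s + 1) / (p * b) * ∫ x : ℝ, |x| ^ s * exp (-(b * |x| ^ p)) := by
  have hs' : 0 < (s + 1) / p := div_pos (by linarith) hp
  rw [integral_abs_rpow_mul_exp_neg_mul_abs_rpow (by linarith) hp hb,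
    integral_abs_rpow_mul_exp_neg_mul_abs_rpow hs hp hb,
    show (s + p + 1) / p = (s + 1) / p + 1 by field_simp; ring,
    show -(s + p + 1) / p = -(s + 1) / p - 1 by field_simp; ring,
    Gamma_add_one hs'.ne', rpow_sub hb, rpow_one]
  field_simp

end AbsMoments

/-- Also true when `∫ e = 0`: both sides then vanish because `x / 0 = 0`. -/
theorem integral_sub_mean_sq_mul_div_integral {α : Type*} [MeasurableSpace α] {μ : Measure α}
    {g e : α → ℝ} (he : Integrable e μ) (hge : Integrable (fun x => g x * e x) μ)
    (hg2e : Integrable (fun x => g x ^ 2 * e x) μ) :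
    ∫ x, (g x - ∫ y, g y * (e y / ∫ z, e z ∂μ) ∂μ) ^ 2 * (e x / ∫ z, e z ∂μ) ∂μ =
      (∫ x, g x ^ 2 * e x ∂μ) / (∫ x, e x ∂μ) - ((∫ x, g x * e x ∂μ) / ∫ x, e x ∂μ) ^ 2 := by
  set Z := ∫ x, e x ∂μ with hZ_def
  set m := (∫ x, g x * e x ∂μ) / Z
  have hm : ∫ y, g y * (e y / Z) ∂μ = m := by
    simp only [← mul_div_assoc, integral_div, m]
  have hexpand : (fun x => (g x - m) ^ 2 * (e x / Z)) =
      fun x => Z⁻¹ * (g x ^ 2 * e x) - (2 * m / Z * (g x * e x) - m ^ 2 / Z * e x) := by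
    funext x; ring
  have hlower : Integrable (fun x => 2 * m / Z * (g x * e x) - m ^ 2 / Z * e x) μ :=
    (hge.const_mul _).sub (he.const_mul _)
  rw [hm, hexpand, integral_sub (hg2e.const_mul _) hlower,
    integral_sub (hge.const_mul _) (he.const_mul _), integral_const_mul, integral_const_mul,
    integral_const_mul]
  by_cases hZ : Z = 0
  · simp [m, hZ]
  · rw [← hZ_def]
    simp only [m]
    field_simp
    ring

/-- Exponential Power Family variance formula: for the exponential power
density `f(x) ∝ e^{-λ|x|^r}` on `ℝ`, tempered at inverse temperature `β > 0` to
`f_β(x) = e^{-βλ|x|^r} / ∫ e^{-βλ|y|^r} dy`, the variance of `log f(X) = -λ|X|^r` (up to an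
additive constant) under `X ∼ f_β` equals `1/(r β²)`; that is,
`I(β) = Var_{x∼f^β}(log f(x)) = 1/(r β²)`. -/
theorem exponential_power_family_variance (lam r β : ℝ)
    (hlam : 0 < lam) (hr : 0 < r) (hβ : 0 < β) :
    (∫ x : ℝ,
        (-(lam * |x| ^ r) -
            ∫ y : ℝ, (-(lam * |y| ^ r)) *
              (Real.exp (-(β * lam * |y| ^ r)) /
                ∫ z : ℝ, Real.exp (-(β * lam * |z| ^ r)))) ^ 2 *
          (Real.exp (-(β * lam * |x| ^ r)) /
            ∫ z : ℝ, Real.exp (-(β * lam * |z| ^ r)))) =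
      1 / (r * β ^ 2) := by
  have hb : 0 < β * lam := mul_pos hβ hlam
  have hintegrable {s : ℝ} (hs : -1 < s) := integrable_abs_rpow_mul_exp_neg_mul_abs_rpow hs hr hb
  have hM₀ := integral_abs_rpow_mul_exp_neg_mul_abs_rpow neg_one_lt_zero hr hb
  have hM₁ := integral_abs_rpow_add_mul_exp_neg_mul_abs_rpow neg_one_lt_zero hr hb
  have hM₂ := integral_abs_rpow_add_mul_exp_neg_mul_abs_rpow (s := r) (by linarith) hr hb
  simp only [rpow_zero, one_mul, zero_add] at hM₀ hM₁
  have hZ : 0 < ∫ z : ℝ, exp (-(β * lam * |z| ^ r)) := by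
    rw [hM₀]
    have := Gamma_pos_of_pos (one_div_pos.mpr hr)
    positivity
  have hg : (fun x : ℝ => -(lam * |x| ^ r) * exp (-(β * lam * |x| ^ r))) =
      fun x => -lam * (|x| ^ r * exp (-(β * lam * |x| ^ r))) := by
    funext x; ring
  have hg2 : (fun x : ℝ => (-(lam * |x| ^ r)) ^ 2 * exp (-(β * lam * |x| ^ r))) =
      fun x => lam ^ 2 * (|x| ^ (r + r) * exp (-(β * lam * |x| ^ r))) := by
    funext x; rw [rpow_add' (abs_nonneg x) (by positivity)]; ring
  rw [integral_sub_mean_sq_mul_div_integral (by simpa using hintegrable neg_one_lt_zero)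
    (hg ▸ (hintegrable (by linarith)).const_mul _) (hg2 ▸ (hintegrable (by linarith)).const_mul _),
    hg, hg2, integral_const_mul, integral_const_mul, hM₂, hM₁]
  generalize ∫ z : ℝ, exp (-(β * lam * |z| ^ r)) = Z at hZ ⊢
  field_simp
  ring
end
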